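/- Let G be a strongly Gorenstein (L,A)-projective R-module. Then the right Ext-orthogonal class G^⊥ = {N : Ext¹_R(G, N) = 0} is a thick subcategory of R-Mod: it is closed under direct summands, extensions, kernels of epimorphisms between its objects, and cokernels of monomorphisms between its objects (i.e., closed under two-out-of-three in short exact sequences). -/

import Mathlib

open CategoryTheory CategoryTheory.Limits DirectSum

namespace DualityPaper

variable {R : Type} [Ring R]

/-- The right `R`-module structure on the group of additive maps out of a left `R`-module,
given by `(f • r) m = f (r • m)`. -/
instance charModuleRight (M A : Type) [AddCommGroup M] [AddCommGroup A] [Module R M] :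
    Module Rᵐᵒᵖ (M →+ A) where
  smul r f := f.comp (DistribMulAction.toAddMonoidHom M r.unop)
  one_smul f := AddMonoidHom.ext fun m => by
    show f ((1 : Rᵐᵒᵖ).unop • m) = f m
    simp
  mul_smul r s f := AddMonoidHom.ext fun m => by
    show f ((r * s).unop • m) = f (s.unop • r.unop • m)
    rw [MulOpposite.unop_mul, mul_smul]
  smul_zero r := rfl
  smul_add r f g := rfl
  add_smul r s f := AddMonoidHom.ext fun m => by
    show f ((r + s).unop • m) = f (r.unop • m) + f (s.unop • m)
    rw [MulOpposite.unop_add, add_smul, map_add]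
  zero_smul f := AddMonoidHom.ext fun m => by
    show f ((0 : Rᵐᵒᵖ).unop • m) = 0
    simp

/-- The left `R`-module structure on the group of additive maps out of a right `R`-module. -/
instance charModuleLeft (N A : Type) [AddCommGroup N] [AddCommGroup A] [Module Rᵐᵒᵖ N] :
    Module R (N →+ A) where
  smul r f := f.comp (DistribMulAction.toAddMonoidHom N (MulOpposite.op r))
  one_smul f := AddMonoidHom.ext fun m => by
    show f ((MulOpposite.op (1 : R)) • m) = f m
    simp
  mul_smul r s f := AddMonoidHom.ext fun m => by
    show f (MulOpposite.op (r * s) • m) = f (MulOpposite.op s • MulOpposite.op r • m)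
    rw [MulOpposite.op_mul, mul_smul]
  smul_zero r := rfl
  smul_add r f g := rfl
  add_smul r s f := AddMonoidHom.ext fun m => by
    show f (MulOpposite.op (r + s) • m) = f (MulOpposite.op r • m) + f (MulOpposite.op s • m)
    rw [MulOpposite.op_add, add_smul, map_add]
  zero_smul f := AddMonoidHom.ext fun m => by
    show f (MulOpposite.op (0 : R) • m) = 0
    simp

/-- The character module `M⁺ = Hom_ℤ(M, ℚ/ℤ)` of a left module, as a right module. -/
def charL (M : ModuleCat.{0} R) : ModuleCat.{0} Rᵐᵒᵖ :=
  ModuleCat.of Rᵐᵒᵖ (M →+ AddCircle (1 : ℚ))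

/-- The character module `N⁺ = Hom_ℤ(N, ℚ/ℤ)` of a right module, as a left module. -/
def charR (N : ModuleCat.{0} Rᵐᵒᵖ) : ModuleCat.{0} R :=
  ModuleCat.of R (N →+ AddCircle (1 : ℚ))

/-- A left module over a (possibly noncommutative) ring is flat iff its character module is an
injective right module (Lambek); we take this as the definition of flatness. -/
def IsFlatMod (M : ModuleCat.{0} R) : Prop := CategoryTheory.Injective (charL M)

/-- `f`, `g` form a short exact sequence `0 → A → B → C → 0`. -/
def SES {A B C : ModuleCat.{0} R} (f : A ⟶ B) (g : B ⟶ C) : Prop :=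
  ∃ w : f ≫ g = 0, (ShortComplex.mk f g w).ShortExact

/-- Vanishing of `Ext^n_R(M, N)`. -/
def ExtVanish (n : ℕ) (M N : ModuleCat.{0} R) : Prop :=
  Subsingleton (((_root_.Ext ℤ (ModuleCat.{0} R) n).obj (Opposite.op M)).obj N)

/-- A complete duality pair `(𝓛, 𝓐)` over `R`. -/
structure CompleteDualityPair (𝓛 : Set (ModuleCat.{0} R)) (𝓐 : Set (ModuleCat.{0} Rᵐᵒᵖ)) :
    Prop where
  isoClosed_L : ∀ {M N : ModuleCat.{0} R}, (M ≅ N) → M ∈ 𝓛 → N ∈ 𝓛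
  isoClosed_A : ∀ {M N : ModuleCat.{0} Rᵐᵒᵖ}, (M ≅ N) → M ∈ 𝓐 → N ∈ 𝓐
  char_mem_iff : ∀ M : ModuleCat.{0} R, M ∈ 𝓛 ↔ charL M ∈ 𝓐
  char_mem_iff' : ∀ N : ModuleCat.{0} Rᵐᵒᵖ, N ∈ 𝓐 ↔ charR N ∈ 𝓛
  summands_A : ∀ A ∈ 𝓐, ∀ (B : ModuleCat.{0} Rᵐᵒᵖ) (i : B ⟶ A) (p : A ⟶ B),
    i ≫ p = 𝟙 B → B ∈ 𝓐
  sums_A : ∀ A B : ModuleCat.{0} Rᵐᵒᵖ, A ∈ 𝓐 → B ∈ 𝓐 → ModuleCat.of Rᵐᵒᵖ (A × B) ∈ 𝓐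
  summands_L : ∀ L ∈ 𝓛, ∀ (K : ModuleCat.{0} R) (i : K ⟶ L) (p : L ⟶ K),
    i ≫ p = 𝟙 K → K ∈ 𝓛
  sums_L : ∀ L K : ModuleCat.{0} R, L ∈ 𝓛 → K ∈ 𝓛 → ModuleCat.of R (L × K) ∈ 𝓛
  self_mem : ModuleCat.of R R ∈ 𝓛
  coprod_L : ∀ (ι : Type) (f : ι → ModuleCat.{0} R), (∀ i, f i ∈ 𝓛) →
    ModuleCat.of R (⨁ i, f i) ∈ 𝓛
  ext_L : ∀ {A B C : ModuleCat.{0} R} (f : A ⟶ B) (g : B ⟶ C),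
    SES f g → A ∈ 𝓛 → C ∈ 𝓛 → B ∈ 𝓛

/-- A doubly infinite exact sequence of projectives which stays exact after applying
`Hom_R(-, T)` for every `T` in the class `𝓣`. -/
structure IsTotallyAcyclicWrt (𝓣 : Set (ModuleCat.{0} R))
    (C : ChainComplex (ModuleCat.{0} R) ℤ) : Prop where
  projective : ∀ n, Projective (C.X n)
  exact : ∀ n, (C.sc n).Exact
  homExact : ∀ T ∈ 𝓣, ∀ (n : ℤ) (g : C.X n ⟶ T), C.d (n + 1) n ≫ g = 0 →
    ∃ h : C.X (n - 1) ⟶ T, C.d n (n - 1) ≫ h = g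

/-- `M` is Gorenstein projective relative to the class `𝓣`:  it is a kernel in a
`Hom_R(-, 𝓣)`-exact exact sequence of projective modules. -/
def IsGProj (𝓣 : Set (ModuleCat.{0} R)) (M : ModuleCat.{0} R) : Prop :=
  ∃ C : ChainComplex (ModuleCat.{0} R) ℤ, IsTotallyAcyclicWrt 𝓣 C ∧
    ∃ n : ℤ, Nonempty (M ≅ kernel (C.d n (n - 1)))

/-- `M` is strongly Gorenstein `(𝓛,𝓐)`-projective. -/
def IsSGProj (𝓣 : Set (ModuleCat.{0} R)) (M : ModuleCat.{0} R) : Prop :=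
  ∃ (P : ModuleCat.{0} R) (f : P ⟶ P), Projective P ∧
    (∃ w : f ≫ f = 0, (ShortComplex.mk f f w).Exact) ∧
    (∀ T ∈ 𝓣, ∀ g : P ⟶ T, f ≫ g = 0 → ∃ h : P ⟶ T, f ≫ h = g) ∧
    Nonempty (M ≅ kernel f)

/-- Resolution dimension of `M` with respect to a class `𝓒` is at most `n`. -/
def ResDimLE (𝓒 : Set (ModuleCat.{0} R)) : ℕ → ModuleCat.{0} R → Prop
  | 0, M => M ∈ 𝓒
  | n + 1, M => ∃ (K C : ModuleCat.{0} R) (f : K ⟶ C) (g : C ⟶ M),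
      C ∈ 𝓒 ∧ SES f g ∧ ResDimLE 𝓒 n K

/-- `K` is an `n`-th kernel of an exact sequence `0 → K → C_{n-1} → ⋯ → C₀ → M → 0`
with all `Cᵢ` in `𝓒`. -/
def IsNthSyzygy (𝓒 : Set (ModuleCat.{0} R)) : ℕ → ModuleCat.{0} R → ModuleCat.{0} R → Prop
  | 0, M, K => Nonempty (K ≅ M)
  | n + 1, M, K => ∃ (S C : ModuleCat.{0} R) (f : S ⟶ C) (g : C ⟶ M),
      C ∈ 𝓒 ∧ SES f g ∧ IsNthSyzygy 𝓒 n S K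

/-- A left Frobenius pair `(𝓧, ω)`. -/
structure LeftFrobeniusPair (𝓧 ω : Set (ModuleCat.{0} R)) : Prop where
  summands_X : ∀ X ∈ 𝓧, ∀ (Y : ModuleCat.{0} R) (i : Y ⟶ X) (p : X ⟶ Y),
    i ≫ p = 𝟙 Y → Y ∈ 𝓧
  extensions_X : ∀ {A B C : ModuleCat.{0} R} (f : A ⟶ B) (g : B ⟶ C),
    SES f g → A ∈ 𝓧 → C ∈ 𝓧 → B ∈ 𝓧
  kerEpi_X : ∀ {A B C : ModuleCat.{0} R} (f : A ⟶ B) (g : B ⟶ C),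
    SES f g → B ∈ 𝓧 → C ∈ 𝓧 → A ∈ 𝓧
  subset : ω ⊆ 𝓧
  inj : ∀ X ∈ 𝓧, ∀ W ∈ ω, ∀ i : ℕ, 1 ≤ i → ExtVanish i X W
  cogen : ∀ X ∈ 𝓧, ∃ (W X' : ModuleCat.{0} R) (f : X ⟶ W) (g : W ⟶ X'),
    W ∈ ω ∧ X' ∈ 𝓧 ∧ SES f g
  summands_ω : ∀ W ∈ ω, ∀ (V : ModuleCat.{0} R) (i : V ⟶ W) (p : W ⟶ V),
    i ≫ p = 𝟙 V → V ∈ ω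



/-!
Splicing `0 → G → P → G → 0` (with `P` projective) with itself gives the periodic projective
resolution `⋯ → P → P → P → G` all of whose differentials are the composite `f : P ↠ G ↪ P`.
So `Ext¹(G, N) = 0` exactly when every `g : P ⟶ N` with `f ≫ g = 0` factors through `f`, and by
periodicity this one condition also says `Ext^i(G, N) = 0` for every `i ≥ 1`. The long exact
`Ext(G, -)` sequence of a short exact sequence then gives 2-out-of-3; concretely, each case is a
diagram chase with the factorization condition, lifting maps along the epimorphism of the
sequence by projectivity of `P`.
-/

def HomExact {C : Type*} [Category* C] [HasZeroMorphisms C] {P : C} (f : P ⟶ P) (N : C) :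
    Prop :=
  ∀ g : P ⟶ N, f ≫ g = 0 → ∃ h : P ⟶ N, f ≫ h = g

section HomExact

variable {C : Type*} [Category* C]

lemma HomExact.of_retract [HasZeroMorphisms C] {P N N' : C} {f : P ⟶ P} {i : N' ⟶ N}
    {p : N ⟶ N'} (hip : i ≫ p = 𝟙 N') (hN : HomExact f N) : HomExact f N' := by
  intro g hg
  obtain ⟨h, hh⟩ := hN (g ≫ i) (by rw [← Category.assoc, hg, zero_comp])
  exact ⟨h ≫ p, by rw [← Category.assoc, hh, Category.assoc, hip, Category.comp_id]⟩

variable [Abelian C] {P : C} [Projective P] {f : P ⟶ P} {S : ShortComplex C}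

lemma homExact_X₂_of_shortExact (w : f ≫ f = 0) (hS : S.ShortExact)
    (h₁ : HomExact f S.X₁) (h₃ : HomExact f S.X₃) : HomExact f S.X₂ := by
  have := hS.mono_f
  have := hS.epi_g
  intro g hg
  obtain ⟨k₃, hk₃⟩ := h₃ (g ≫ S.g) (by rw [← Category.assoc, hg, zero_comp])
  obtain ⟨k, hk⟩ : ∃ k : P ⟶ S.X₂, k ≫ S.g = k₃ := ⟨_, Projective.factorThru_comp k₃ S.g⟩
  have ht : (g - f ≫ k) ≫ S.g = 0 := by simp [hk, hk₃]
  obtain ⟨k₁, hk₁⟩ := h₁ (hS.exact.lift _ ht) (by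
    rw [← cancel_mono S.f, Category.assoc, hS.exact.lift_f, Preadditive.comp_sub, hg,
      ← Category.assoc, w, zero_comp, sub_zero, zero_comp])
  refine ⟨k₁ ≫ S.f + k, ?_⟩
  rw [Preadditive.comp_add, ← Category.assoc, hk₁, hS.exact.lift_f, sub_add_cancel]

lemma homExact_X₁_of_shortExact (w : f ≫ f = 0) (hS : S.ShortExact)
    (h₂ : HomExact f S.X₂) (h₃ : HomExact f S.X₃) : HomExact f S.X₁ := by
  have := hS.mono_f
  have := hS.epi_g
  intro u hu
  obtain ⟨k₂, hk₂⟩ := h₂ (u ≫ S.f) (by rw [← Category.assoc, hu, zero_comp])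
  obtain ⟨k₃, hk₃⟩ := h₃ (k₂ ≫ S.g) (by
    rw [← Category.assoc, hk₂, Category.assoc, S.zero, comp_zero])
  obtain ⟨k, hk⟩ : ∃ k : P ⟶ S.X₂, k ≫ S.g = k₃ := ⟨_, Projective.factorThru_comp k₃ S.g⟩
  have ht : (k₂ - f ≫ k) ≫ S.g = 0 := by simp [hk, hk₃]
  refine ⟨hS.exact.lift _ ht, ?_⟩
  rw [← cancel_mono S.f, Category.assoc, hS.exact.lift_f, Preadditive.comp_sub, hk₂,
    ← Category.assoc, w, zero_comp, sub_zero]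

lemma homExact_X₃_of_shortExact (w : f ≫ f = 0) (hS : S.ShortExact)
    (h₁ : HomExact f S.X₁) (h₂ : HomExact f S.X₂) : HomExact f S.X₃ := by
  have := hS.mono_f
  have := hS.epi_g
  intro g hg
  obtain ⟨k, hk⟩ : ∃ k : P ⟶ S.X₂, k ≫ S.g = g := ⟨_, Projective.factorThru_comp g S.g⟩
  have ht : (f ≫ k) ≫ S.g = 0 := by rw [Category.assoc, hk, hg]
  obtain ⟨k₁, hk₁⟩ := h₁ (hS.exact.lift _ ht) (by
    rw [← cancel_mono S.f, Category.assoc, hS.exact.lift_f, ← Category.assoc, w, zero_comp,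
      zero_comp])
  obtain ⟨k₂, hk₂⟩ := h₂ (k - k₁ ≫ S.f) (by
    rw [Preadditive.comp_sub, ← Category.assoc, hk₁, hS.exact.lift_f, sub_self])
  refine ⟨k₂ ≫ S.g, ?_⟩
  rw [← Category.assoc, hk₂, Preadditive.sub_comp, Category.assoc, S.zero, comp_zero, sub_zero,
    hk]

end HomExact

section PeriodicResolution

variable {C : Type*} [Category* C] [Abelian C] {P : C} {f : P ⟶ P}

def periodicComplex (w : f ≫ f = 0) : ChainComplex C ℕ :=
  ChainComplex.of (fun _ => P) (fun _ => f) (fun _ => w)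

lemma periodicComplex_d_succ (w : f ≫ f = 0) (n : ℕ) : (periodicComplex w).d (n + 1) n = f := by
  simp [periodicComplex]

lemma periodicComplex_exactAt_succ {w : f ≫ f = 0} (hf : (ShortComplex.mk f f w).Exact)
    (n : ℕ) : (periodicComplex w).ExactAt (n + 1) := by
  rw [HomologicalComplex.exactAt_iff' _ (n + 1 + 1) (n + 1) n (by simp) (by simp)]
  simp only [HomologicalComplex.sc', HomologicalComplex.shortComplexFunctor',
    periodicComplex_d_succ]
  exact hf

lemma comp_kernelLift_self (w : f ≫ f = 0) : f ≫ kernel.lift f f w = 0 := by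
  simp [← cancel_mono (kernel.ι f), w]

lemma exact_kernelLift_self {w : f ≫ f = 0} (hf : (ShortComplex.mk f f w).Exact) :
    (ShortComplex.mk f (kernel.lift f f w) (comp_kernelLift_self w)).Exact := by
  let α : ShortComplex.mk f (kernel.lift f f w) (comp_kernelLift_self w) ⟶
      ShortComplex.mk f f w :=
    { τ₁ := 𝟙 P
      τ₂ := 𝟙 P
      τ₃ := kernel.ι f }
  rwa [ShortComplex.exact_iff_of_epi_of_isIso_of_mono α]

noncomputable def periodicResolution [Projective P] {w : f ≫ f = 0}
    (hf : (ShortComplex.mk f f w).Exact) : ProjectiveResolution (kernel f) where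
  complex := periodicComplex w
  projective _ := inferInstanceAs (Projective P)
  π := (ChainComplex.toSingle₀Equiv _ _).symm ⟨kernel.lift f f w, by
    simp only [periodicComplex_d_succ w 0]
    exact comp_kernelLift_self w⟩
  quasiIso := ⟨fun n => by
    cases n with
    | zero =>
      rw [ChainComplex.quasiIsoAt₀_iff, ShortComplex.quasiIso_iff_of_zeros' _ rfl rfl rfl]
      refine (ShortComplex.exact_and_epi_g_iff_of_iso ?_).2
        ⟨exact_kernelLift_self hf, hf.epi_kernelLift⟩
      exact ShortComplex.isoMk (Iso.refl _) (Iso.refl _) (Iso.refl _)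
        (by erw [Category.id_comp, Category.comp_id]; exact (periodicComplex_d_succ w 0).symm)
        (by erw [Category.id_comp, Category.comp_id]
            exact (ChainComplex.toSingle₀Equiv_symm_apply_f_zero (C := periodicComplex w) _ _).symm)
    | succ n =>
      rw [quasiIsoAt_iff_exactAt' (hL := ChainComplex.exactAt_succ_single_obj ..)]
      exact periodicComplex_exactAt_succ hf n⟩

lemma isZero_ext_one_kernel_iff_homExact [EnoughProjectives C] {k : Type*} [Ring k]
    [Linear k C] [Projective P] {w : f ≫ f = 0} (hf : (ShortComplex.mk f f w).Exact) (N : C) :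
    IsZero (((Ext k C 1).obj (Opposite.op (kernel f))).obj N) ↔ HomExact f N := by
  rw [((periodicResolution hf).isoExt 1 N).isZero_iff,
    ← HomologicalComplex.exactAt_iff_isZero_homology,
    HomologicalComplex.exactAt_iff' _ 0 1 2 (by simp) (by simp),
    ShortComplex.moduleCat_exact_iff]
  have hd (n : ℕ) (x : P ⟶ N) :
      ((periodicResolution hf).complex.linearYonedaObj k N).d n (n + 1) x = f ≫ x := by
    simp only [periodicResolution, ChainComplex.linearYonedaObj_d, periodicComplex_d_succ]
    rfl
  constructor
  · intro H g hg
    obtain ⟨h, hh⟩ := H g ((hd 1 g).trans hg)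
    exact ⟨h, (hd 0 h).symm.trans hh⟩
  · intro H g hg
    obtain ⟨h, hh⟩ := H g ((hd 1 g).symm.trans hg)
    exact ⟨h, (hd 0 h).trans hh⟩

end PeriodicResolution

lemma extVanish_iff_isZero (n : ℕ) (M N : ModuleCat.{0} R) :
    ExtVanish n M N ↔ IsZero (((Ext ℤ (ModuleCat.{0} R) n).obj (Opposite.op M)).obj N) :=
  ModuleCat.isZero_iff_subsingleton.symm

lemma extVanish_congr_left {n : ℕ} {M M' : ModuleCat.{0} R} (e : M ≅ M') (N : ModuleCat.{0} R) :
    ExtVanish n M N ↔ ExtVanish n M' N := by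
  simp only [extVanish_iff_isZero]
  exact (((Ext ℤ (ModuleCat.{0} R) n).mapIso e.op).app N).isZero_iff.symm

theorem stmt16_general
    (R : Type) [Ring R] (𝓛 : Set (ModuleCat.{0} R))
    (G : ModuleCat.{0} R) (hG : IsSGProj 𝓛 G) :
    (∀ (N N' : ModuleCat.{0} R) (i : N' ⟶ N) (p : N ⟶ N'),
      i ≫ p = 𝟙 N' → ExtVanish 1 G N → ExtVanish 1 G N') ∧
    (∀ {A B C : ModuleCat.{0} R} (f : A ⟶ B) (g : B ⟶ C), SES f g →
      ((ExtVanish 1 G A → ExtVanish 1 G C → ExtVanish 1 G B) ∧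
       (ExtVanish 1 G B → ExtVanish 1 G C → ExtVanish 1 G A) ∧
       (ExtVanish 1 G A → ExtVanish 1 G B → ExtVanish 1 G C))) := by
  obtain ⟨P, f, hP, ⟨w, hf⟩, -, ⟨e⟩⟩ := hG
  have hExt (N : ModuleCat.{0} R) : ExtVanish 1 G N ↔ HomExact f N :=
    (extVanish_congr_left e N).trans <|
      (extVanish_iff_isZero 1 _ N).trans (isZero_ext_one_kernel_iff_homExact hf N)
  refine ⟨fun N N' i p hip => ?_, fun _ _ ⟨_, hS⟩ => ?_⟩
  · simpa only [hExt] using HomExact.of_retract hip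
  · simp only [hExt]
    exact ⟨homExact_X₂_of_shortExact w hS, homExact_X₁_of_shortExact w hS,
      homExact_X₃_of_shortExact w hS⟩

/-- the right Ext-orthogonal class of a strongly Gorenstein (𝓛,𝓐)-projective
module is thick. -/
theorem stmt16
    (R : Type) [Ring R] (𝓛 : Set (ModuleCat.{0} R)) (𝓐 : Set (ModuleCat.{0} Rᵐᵒᵖ))
    (hdp : CompleteDualityPair 𝓛 𝓐) (G : ModuleCat.{0} R) (hG : IsSGProj 𝓛 G) :
    (∀ (N N' : ModuleCat.{0} R) (i : N' ⟶ N) (p : N ⟶ N'),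
      i ≫ p = 𝟙 N' → ExtVanish 1 G N → ExtVanish 1 G N') ∧
    (∀ {A B C : ModuleCat.{0} R} (f : A ⟶ B) (g : B ⟶ C), SES f g →
      ((ExtVanish 1 G A → ExtVanish 1 G C → ExtVanish 1 G B) ∧
       (ExtVanish 1 G B → ExtVanish 1 G C → ExtVanish 1 G A) ∧
       (ExtVanish 1 G A → ExtVanish 1 G B → ExtVanish 1 G C))) :=
  stmt16_general R 𝓛 G hG

end DualityPaper
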